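/- arXiv:1712.09912 — 2 statements merged into one kernel-verified Lean document; each statement's English description precedes it below -/
import Mathlib

section
/- Let P₀ = N_p(0, I_p) and, for unit vectors u, v ∈ R^p and κ with |κ·u^T v| < 1, let P_u = N_p(0, I_p + κ u u^T) and P_v = N_p(0, I_p + κ v v^T). Then E_{P₀}[ (dP_u/dP₀)(dP_v/dP₀) ] = (1 − (κ u^T v)²)^{-1/2}. -/
open MeasureTheory Matrix

/-- Density of the centered `p`-dimensional Gaussian `N_p(0, S)` at `x`. -/
noncomputable def gaussDensity (p : ℕ) (S : Matrix (Fin p) (Fin p) ℝ)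
    (x : Fin p → ℝ) : ℝ :=
  (2 * Real.pi) ^ (-(p : ℝ) / 2) * S.det ^ (-(1:ℝ) / 2) *
    Real.exp (-(x ⬝ᵥ S⁻¹.mulVec x) / 2)

/-!
Write `Σ_u = I + κ u uᵀ`, `Σ_v = I + κ v vᵀ` and `A = Σ_u⁻¹ + Σ_v⁻¹ - I`. The integrand is
`(2π)^(-p/2) (det Σ_u det Σ_v)^(-1/2) exp (-xᵀAx/2)`, so for positive definite `A` the integral is
`det (Σ_u A Σ_v) ^ (-1/2)`. Now `Σ_u A Σ_v = Σ_u + Σ_v - Σ_u Σ_v = I - κ² (uᵀv) u vᵀ` has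
determinant `1 - (κ uᵀv)²`. By Sherman–Morrison, `A = I - a (u uᵀ + v vᵀ)` with `a = κ / (1 + κ)`,
and the largest eigenvalue of `u uᵀ + v vᵀ` is `1 + |uᵀv|`, so `A` is positive definite as soon as
`κ |uᵀv| < 1`.
-/

open Real

namespace Matrix

variable {ι : Type*} [Fintype ι]

section CommRing

variable {R : Type*} [CommRing R]

theorem dotProduct_vecMulVec_mulVec (x u w y : ι → R) :
    x ⬝ᵥ (vecMulVec u w *ᵥ y) = (x ⬝ᵥ u) * (w ⬝ᵥ y) := by
  rw [vecMulVec_mulVec, op_smul_eq_smul, dotProduct_smul, smul_eq_mul, mul_comm]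

variable [DecidableEq ι]

theorem det_one_add_smul_vecMulVec (c : R) (u w : ι → R) :
    (1 + c • vecMulVec u w).det = 1 + c * (w ⬝ᵥ u) := by
  rw [← smul_vecMulVec, vecMulVec_eq Unit, det_one_add_replicateCol_mul_replicateRow,
    dotProduct_smul, smul_eq_mul]

theorem mul_inv_add_inv_sub_one_mul {P Q : Matrix ι ι R} (hP : IsUnit P.det)
    (hQ : IsUnit Q.det) : P * (P⁻¹ + Q⁻¹ - 1) * Q = 1 - (P - 1) * (Q - 1) := by
  simp only [Matrix.mul_sub, Matrix.mul_add, Matrix.sub_mul, Matrix.add_mul, mul_nonsing_inv _ hP,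
    Matrix.mul_assoc, nonsing_inv_mul _ hQ]
  noncomm_ring

end CommRing

theorem inv_one_add_smul_vecMulVec [DecidableEq ι] {K : Type*} [Field K] {c : K} (u w : ι → K)
    (h : 1 + c * (w ⬝ᵥ u) ≠ 0) :
    (1 + c • vecMulVec u w)⁻¹ = 1 - (c / (1 + c * (w ⬝ᵥ u))) • vecMulVec u w := by
  apply inv_eq_right_inv
  have hc : c / (1 + c * (w ⬝ᵥ u)) * (1 + c * (w ⬝ᵥ u)) = c := div_mul_cancel₀ _ h
  rw [Matrix.mul_sub, Matrix.mul_one, Matrix.add_mul, Matrix.one_mul, smul_mul_smul_comm,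
    vecMulVec_mul_vecMulVec, vecMulVec_smul]
  linear_combination (norm := module) -(hc • vecMulVec u w)

theorem det_one_add_smul_vecMulVec_mul_inv_add_inv_sub_one_mul [DecidableEq ι] {K : Type*}
    [Field K] {c : K} {u v : ι → K} (hu : 1 + c * (u ⬝ᵥ u) ≠ 0) (hv : 1 + c * (v ⬝ᵥ v) ≠ 0) :
    ((1 + c • vecMulVec u u) * ((1 + c • vecMulVec u u)⁻¹ + (1 + c • vecMulVec v v)⁻¹ - 1)
      * (1 + c • vecMulVec v v)).det = 1 - (c * (u ⬝ᵥ v)) ^ 2 := by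
  rw [mul_inv_add_inv_sub_one_mul (by rw [det_one_add_smul_vecMulVec]; exact hu.isUnit)
      (by rw [det_one_add_smul_vecMulVec]; exact hv.isUnit),
    add_sub_cancel_left, add_sub_cancel_left, smul_mul_smul_comm, vecMulVec_mul_vecMulVec,
    vecMulVec_smul, smul_smul, sub_eq_add_neg, ← neg_smul, det_one_add_smul_vecMulVec,
    dotProduct_comm v u]
  ring

theorem sq_dotProduct_le (x y : ι → ℝ) : (x ⬝ᵥ y) ^ 2 ≤ (x ⬝ᵥ x) * (y ⬝ᵥ y) := by
  simpa only [dotProduct, sq] using Finset.sum_mul_sq_le_sq_mul_sq Finset.univ x y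

/-- Cauchy–Schwarz for the components of `v` and `x` orthogonal to the unit vector `u`. -/
theorem sq_dotProduct_sub_le {u : ι → ℝ} (hu : u ⬝ᵥ u = 1) (v x : ι → ℝ) :
    (v ⬝ᵥ x - (u ⬝ᵥ v) * (u ⬝ᵥ x)) ^ 2
      ≤ (v ⬝ᵥ v - (u ⬝ᵥ v) ^ 2) * (x ⬝ᵥ x - (u ⬝ᵥ x) ^ 2) := by
  have h := sq_dotProduct_le (v - (u ⬝ᵥ v) • u) (x - (u ⬝ᵥ x) • u)
  simp only [sub_dotProduct, dotProduct_sub, smul_dotProduct, dotProduct_smul, smul_eq_mul, hu,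
    dotProduct_comm v u, dotProduct_comm x u] at h
  convert h using 2 <;> ring

theorem sq_dotProduct_add_sq_dotProduct_le {u v : ι → ℝ} (hu : u ⬝ᵥ u = 1) (hv : v ⬝ᵥ v = 1)
    (x : ι → ℝ) : (u ⬝ᵥ x) ^ 2 + (v ⬝ᵥ x) ^ 2 ≤ (1 + |u ⬝ᵥ v|) * (x ⬝ᵥ x) := by
  have hgram := sq_dotProduct_sub_le hu v x
  have hux := sq_dotProduct_le u x
  have huv := sq_dotProduct_le u v
  rw [hv] at hgram
  rw [hu, one_mul] at hux
  rw [hu, hv, one_mul] at huv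
  set t := u ⬝ᵥ v
  set α := u ⬝ᵥ x
  set β := v ⬝ᵥ x
  have hs : |t| ^ 2 = t ^ 2 := sq_abs t
  have hcross : 2 * t * α * β ≤ |t| * (α ^ 2 + β ^ 2) := by
    rcases abs_cases t with ⟨ht, ht0⟩ | ⟨ht, ht0⟩ <;> rw [ht]
    · nlinarith [mul_nonneg ht0 (sq_nonneg (α - β))]
    · nlinarith [mul_nonneg (neg_nonneg.2 ht0.le) (sq_nonneg (α + β))]
  rcases ((sq_le_one_iff_abs_le_one t).1 huv).lt_or_eq with ht1 | ht1
  · have : (1 - |t|) * (α ^ 2 + β ^ 2 - (1 + |t|) * (x ⬝ᵥ x)) ≤ 0 := by nlinarith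
    nlinarith
  · have ht2 : t ^ 2 = 1 := by rw [← hs, ht1, one_pow]
    rw [ht2, sub_self, zero_mul] at hgram
    have hβ : β = t * α := sub_eq_zero.1 (sq_eq_zero_iff.1 (le_antisymm hgram (sq_nonneg _)))
    rw [ht1, hβ, mul_pow, ht2]
    linarith

theorem posDef_one_sub_smul_vecMulVec_sub_smul_vecMulVec [DecidableEq ι] {u v : ι → ℝ}
    (hu : u ⬝ᵥ u = 1) (hv : v ⬝ᵥ v = 1) {a : ℝ} (ha : 0 ≤ a) (hauv : a * (1 + |u ⬝ᵥ v|) < 1) :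
    (1 - a • vecMulVec u u - a • vecMulVec v v).PosDef := by
  refine .of_dotProduct_mulVec_pos (by simp [IsHermitian]) fun x hx => ?_
  have hx : 0 < x ⬝ᵥ x := dotProduct_star_self_pos_iff.2 hx
  have hsum := sq_dotProduct_add_sq_dotProduct_le hu hv x
  simp only [star_trivial, sub_mulVec, one_mulVec, smul_mulVec, dotProduct_sub, dotProduct_smul,
    dotProduct_vecMulVec_mulVec, smul_eq_mul, dotProduct_comm x u, dotProduct_comm x v]
  nlinarith [mul_le_mul_of_nonneg_left hsum ha]

theorem posDef_inv_one_add_smul_vecMulVec_add_inv_sub_one [DecidableEq ι] {u v : ι → ℝ}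
    (hu : u ⬝ᵥ u = 1) (hv : v ⬝ᵥ v = 1) {κ : ℝ} (hκ : 0 ≤ κ) (huv : (κ * (u ⬝ᵥ v)) ^ 2 < 1) :
    ((1 + κ • vecMulVec u u)⁻¹ + (1 + κ • vecMulVec v v)⁻¹ - 1).PosDef := by
  have h1κ : 0 < 1 + κ := by linarith
  have hκuv : κ * |u ⬝ᵥ v| < 1 := by
    simpa only [abs_mul, abs_of_nonneg hκ] using (sq_lt_one_iff_abs_lt_one _).1 huv
  rw [inv_one_add_smul_vecMulVec u u (by rw [hu]; positivity),
    inv_one_add_smul_vecMulVec v v (by rw [hv]; positivity), hu, hv, mul_one]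
  convert posDef_one_sub_smul_vecMulVec_sub_smul_vecMulVec hu hv (a := κ / (1 + κ))
    (by positivity) ?_ using 1
  · abel
  · rw [div_mul_eq_mul_div, div_lt_one h1κ, mul_one_add]
    linarith

theorem integral_comp_mulVec [DecidableEq ι] {E : Type*} [NormedAddCommGroup E]
    [NormedSpace ℝ E] {B : Matrix ι ι ℝ} (hB : B.det ≠ 0) (g : (ι → ℝ) → E) :
    ∫ x, g (B *ᵥ x) = |B.det|⁻¹ • ∫ y, g y := by
  have hemb : MeasurableEmbedding (B *ᵥ ·) :=
    (toLinearEquiv' B (invertibleOfIsUnitDet B hB.isUnit)).toContinuousLinearEquiv.toHomeomorph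
      |>.measurableEmbedding
  have hmap : Measure.map (B *ᵥ ·) volume = ENNReal.ofReal |B.det⁻¹| • volume := by
    rw [← LinearMap.det_toLin' B]
    exact Real.map_linearMap_volume_pi_eq_smul_volume_pi (f := toLin' B)
      (by rwa [LinearMap.det_toLin'])
  rw [← hemb.integral_map, hmap, integral_smul_measure, ENNReal.toReal_ofReal (abs_nonneg _),
    abs_inv]

theorem integral_exp_neg_dotProduct_self_div_two :
    ∫ x : ι → ℝ, exp (-(x ⬝ᵥ x) / 2) = (2 * π) ^ ((Fintype.card ι : ℝ) / 2) := by
  have h (x : ι → ℝ) : exp (-(x ⬝ᵥ x) / 2) = ∏ i, exp (-2⁻¹ * x i ^ 2) := by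
    rw [← exp_sum, dotProduct, neg_div, Finset.sum_div, ← Finset.sum_neg_distrib]
    exact congrArg exp (Finset.sum_congr rfl fun i _ => by ring)
  simp_rw [h]
  rw [volume_pi, integral_fintype_prod_eq_pow (fun s => exp (-2⁻¹ * s ^ 2)), integral_gaussian,
    show π / 2⁻¹ = 2 * π by ring, sqrt_eq_rpow, ← rpow_natCast, ← rpow_mul (by positivity)]
  ring_nf

open scoped MatrixOrder in
theorem integral_exp_neg_dotProduct_mulVec_div_two [DecidableEq ι] {A : Matrix ι ι ℝ}
    (hA : A.PosDef) :
    ∫ x : ι → ℝ, exp (-(x ⬝ᵥ A *ᵥ x) / 2)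
      = (2 * π) ^ ((Fintype.card ι : ℝ) / 2) * A.det ^ (-(1 : ℝ) / 2) := by
  set B := CFC.sqrt A
  have hB : B.PosSemidef := (CFC.sqrt_nonneg A).posSemidef
  have hdetB : B.det = √A.det := by rw [PosSemidef.det_sqrt hA.posSemidef, RCLike.sqrt_real]
  have hquad (x : ι → ℝ) : x ⬝ᵥ A *ᵥ x = (B *ᵥ x) ⬝ᵥ (B *ᵥ x) := by
    rw [← CFC.sqrt_mul_sqrt_self A hA.posSemidef.nonneg, ← mulVec_mulVec, dotProduct_mulVec,
      ← mulVec_transpose, ← conjTranspose_eq_transpose_of_trivial, hB.isHermitian.eq]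
  simp_rw [hquad]
  rw [integral_comp_mulVec (g := fun y : ι → ℝ => exp (-(y ⬝ᵥ y) / 2))
      (by rw [hdetB]; exact (sqrt_pos.2 hA.det_pos).ne'),
    integral_exp_neg_dotProduct_self_div_two, hdetB, abs_of_nonneg (sqrt_nonneg _), sqrt_eq_rpow,
    ← rpow_neg hA.det_pos.le, smul_eq_mul, mul_comm]
  norm_num

end Matrix

theorem gaussDensity_one (p : ℕ) (x : Fin p → ℝ) :
    gaussDensity p 1 x = (2 * π) ^ (-(p : ℝ) / 2) * exp (-(x ⬝ᵥ x) / 2) := by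
  simp [gaussDensity]

theorem gaussDensity_div_gaussDensity_one {p : ℕ} (S : Matrix (Fin p) (Fin p) ℝ)
    (x : Fin p → ℝ) :
    gaussDensity p S x / gaussDensity p 1 x
      = S.det ^ (-(1 : ℝ) / 2) * exp (-(x ⬝ᵥ (S⁻¹ - 1) *ᵥ x) / 2) := by
  rw [gaussDensity_one, gaussDensity, sub_mulVec, one_mulVec, dotProduct_sub,
    show -(x ⬝ᵥ S⁻¹ *ᵥ x - x ⬝ᵥ x) / 2 = -(x ⬝ᵥ S⁻¹ *ᵥ x) / 2 - -(x ⬝ᵥ x) / 2 by ring, exp_sub]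
  field_simp

theorem gaussDensity_ratio_mul_ratio_mul_gaussDensity_one {p : ℕ}
    (S T : Matrix (Fin p) (Fin p) ℝ) (x : Fin p → ℝ) :
    gaussDensity p S x / gaussDensity p 1 x * (gaussDensity p T x / gaussDensity p 1 x)
        * gaussDensity p 1 x
      = (2 * π) ^ (-(p : ℝ) / 2) * S.det ^ (-(1 : ℝ) / 2) * T.det ^ (-(1 : ℝ) / 2)
        * exp (-(x ⬝ᵥ (S⁻¹ + T⁻¹ - 1) *ᵥ x) / 2) := by
  have hexp : -(x ⬝ᵥ (S⁻¹ + T⁻¹ - 1) *ᵥ x) / 2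
      = -(x ⬝ᵥ (S⁻¹ - 1) *ᵥ x) / 2 + -(x ⬝ᵥ (T⁻¹ - 1) *ᵥ x) / 2 + -(x ⬝ᵥ x) / 2 := by
    simp only [sub_mulVec, add_mulVec, one_mulVec, dotProduct_sub, dotProduct_add]
    ring
  rw [gaussDensity_div_gaussDensity_one, gaussDensity_div_gaussDensity_one, gaussDensity_one,
    hexp, exp_add, exp_add]
  ring

theorem gaussian_likelihood_ratio_product_general {p : ℕ} (u v : Fin p → ℝ)
    (hu : u ⬝ᵥ u = 1) (hv : v ⬝ᵥ v = 1) (κ : ℝ) (hκ : 0 ≤ κ)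
    (huv : (κ * (u ⬝ᵥ v)) ^ 2 < 1) :
    ∫ x : Fin p → ℝ,
        (gaussDensity p (1 + κ • vecMulVec u u) x / gaussDensity p 1 x) *
        (gaussDensity p (1 + κ • vecMulVec v v) x / gaussDensity p 1 x) *
        gaussDensity p 1 x
      = (1 - (κ * (u ⬝ᵥ v)) ^ 2) ^ (-(1:ℝ) / 2) := by
  set Su : Matrix (Fin p) (Fin p) ℝ := 1 + κ • vecMulVec u u
  set Sv : Matrix (Fin p) (Fin p) ℝ := 1 + κ • vecMulVec v v
  have hdetu : 0 < Su.det := by rw [det_one_add_smul_vecMulVec, hu]; linarith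
  have hdetv : 0 < Sv.det := by rw [det_one_add_smul_vecMulVec, hv]; linarith
  have hA : (Su⁻¹ + Sv⁻¹ - 1).PosDef :=
    posDef_inv_one_add_smul_vecMulVec_add_inv_sub_one hu hv hκ huv
  have hdet : Su.det * (Su⁻¹ + Sv⁻¹ - 1).det * Sv.det = 1 - (κ * (u ⬝ᵥ v)) ^ 2 := by
    rw [← det_mul, ← det_mul]
    exact det_one_add_smul_vecMulVec_mul_inv_add_inv_sub_one_mul (by rw [hu]; linarith)
      (by rw [hv]; linarith)
  simp_rw [gaussDensity_ratio_mul_ratio_mul_gaussDensity_one]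
  rw [integral_const_mul, integral_exp_neg_dotProduct_mulVec_div_two hA, Fintype.card_fin, ← hdet,
    mul_rpow (mul_pos hdetu hA.det_pos).le hdetv.le, mul_rpow hdetu.le hA.det_pos.le, neg_div,
    rpow_neg (by positivity)]
  field_simp

theorem gaussian_likelihood_ratio_product {p : ℕ} (u v : Fin p → ℝ)
    (hu : u ⬝ᵥ u = 1) (hv : v ⬝ᵥ v = 1) (κ : ℝ) (hκ : 0 ≤ κ)
    (hposu : (1 + κ • vecMulVec u u : Matrix (Fin p) (Fin p) ℝ).PosDef)
    (hposv : (1 + κ • vecMulVec v v : Matrix (Fin p) (Fin p) ℝ).PosDef)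
    (huv : (κ * (u ⬝ᵥ v)) ^ 2 < 1) :
    ∫ x : Fin p → ℝ,
        (gaussDensity p (1 + κ • vecMulVec u u) x / gaussDensity p 1 x) *
        (gaussDensity p (1 + κ • vecMulVec v v) x / gaussDensity p 1 x) *
        gaussDensity p 1 x
      = (1 - (κ * (u ⬝ᵥ v)) ^ 2) ^ (-(1:ℝ) / 2) :=
  gaussian_likelihood_ratio_product_general u v hu hv κ hκ huv
end

section
/- Suppose the covariance matrices Σ_i of a piecewise constant sequence change only at points η_1 < … < η_K, and the interval (s,e) contains at least one change point. Then the function t ↦ ‖Σ̃_t^{s,e}‖_op on {s+1,…,e−1} attains its maximum at some true change point; i.e., argmax_t ‖Σ̃_t^{s,e}‖_op intersects {η_1,…,η_K}. -/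
open Finset Matrix

/-- The `ℓ²`-operator norm of a real `p × p` matrix. -/
noncomputable def matOpNorm {p : ℕ} (S : Matrix (Fin p) (Fin p) ℝ) : ℝ :=
  ‖(Matrix.toEuclideanCLM (𝕜 := ℝ) S : EuclideanSpace ℝ (Fin p) →L[ℝ] EuclideanSpace ℝ (Fin p))‖

/-- The population covariance CUSUM statistic over `(s, e]` at time `t`. -/
noncomputable def covCusum {p : ℕ} (S : ℕ → Matrix (Fin p) (Fin p) ℝ) (s e t : ℕ) :
    Matrix (Fin p) (Fin p) ℝ :=
  Real.sqrt (((e : ℝ) - t) / (((e : ℝ) - s) * ((t : ℝ) - s))) • (∑ i ∈ Ioc s t, S i) -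
    Real.sqrt (((t : ℝ) - s) / (((e : ℝ) - s) * ((e : ℝ) - t))) • (∑ i ∈ Ioc t e, S i)

/-!
With `F t = ∑_{s < i ≤ t} Σ_i` and `h t = √((t - s)(e - t)/(e - s))`, the CUSUM satisfies
`h t • Σ̃_t = F t - (t - s)/(e - s) • F e` for `s ≤ t ≤ e`. Between consecutive change points the
right-hand side is affine in `t` while `h` is concave, so in any norm `‖Σ̃_t‖` is bounded by its
values at the two ends of the block (clipped to `[s, e]`). Each end is either a change point inside
`(s, e)` or one of `s`, `e`, where the CUSUM vanishes; hence the change point that maximizes the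
norm among the change points maximizes it over all of `(s, e)`.
-/

noncomputable def cusumScale (s e x : ℝ) : ℝ := √((x - s) * (e - x) / (e - s))

lemma cusumScale_chord_le {s e t₁ t t₂ : ℝ} (hs : s ≤ t₁) (h₁ : t₁ ≤ t) (h₂ : t ≤ t₂)
    (he : t₂ ≤ e) :
    (t₂ - t) * cusumScale s e t₁ + (t - t₁) * cusumScale s e t₂ ≤ (t₂ - t₁) * cusumScale s e t := by
  rcases eq_or_lt_of_le (hs.trans (h₁.trans (h₂.trans he))) with hse | hse
  · simp [cusumScale, ← hse]
  have hq : ∀ x, s ≤ x → x ≤ e → 0 ≤ (x - s) * (e - x) / (e - s) := fun x hx hx' =>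
    div_nonneg (mul_nonneg (by linarith) (by linarith)) (by linarith)
  have hchord : (t₂ - t) * ((t₁ - s) * (e - t₁) / (e - s))
      + (t - t₁) * ((t₂ - s) * (e - t₂) / (e - s)) + (t₂ - t) * (t - t₁) * (t₂ - t₁) / (e - s)
      = (t₂ - t₁) * ((t - s) * (e - t) / (e - s)) := by
    field_simp; ring
  have hdefect : 0 ≤ (t₂ - t) * (t - t₁) * (t₂ - t₁) / (e - s) :=
    div_nonneg (mul_nonneg (mul_nonneg (by linarith) (by linarith)) (by linarith)) (by linarith)
  have ha := Real.sq_sqrt (hq t₁ hs (by linarith))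
  have hb := Real.sq_sqrt (hq t₂ (by linarith) he)
  unfold cusumScale
  rw [← Real.sqrt_sq (by linarith : 0 ≤ t₂ - t₁), ← Real.sqrt_mul (sq_nonneg _)]
  apply Real.le_sqrt_of_sq_le
  generalize √((t₁ - s) * (e - t₁) / (e - s)) = a at ha ⊢
  generalize √((t₂ - s) * (e - t₂) / (e - s)) = b at hb ⊢
  rw [← ha, ← hb] at hchord
  have hsplit : ((t₂ - t) * a + (t - t₁) * b) ^ 2 + (t₂ - t) * (t - t₁) * (a - b) ^ 2
      = (t₂ - t₁) * ((t₂ - t) * a ^ 2 + (t - t₁) * b ^ 2) := by ring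
  nlinarith [mul_nonneg (mul_nonneg (by linarith : 0 ≤ t₂ - t) (by linarith : 0 ≤ t - t₁))
    (sq_nonneg (a - b)), mul_nonneg (by linarith : 0 ≤ t₂ - t₁) hdefect]

lemma cusumScale_nonneg (s e x : ℝ) : 0 ≤ cusumScale s e x := Real.sqrt_nonneg _

lemma cusumScale_pos {s e x : ℝ} (hs : s < x) (he : x < e) : 0 < cusumScale s e x :=
  Real.sqrt_pos.2 (div_pos (mul_pos (sub_pos.2 hs) (sub_pos.2 he)) (by linarith))

section Cusum

variable {E : Type*} [AddCommGroup E] [Module ℝ E]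

noncomputable def cusum (f : ℕ → E) (s e t : ℕ) : E :=
  √(((e : ℝ) - t) / (((e : ℝ) - s) * ((t : ℝ) - s))) • (∑ i ∈ Ioc s t, f i) -
    √(((t : ℝ) - s) / (((e : ℝ) - s) * ((e : ℝ) - t))) • (∑ i ∈ Ioc t e, f i)

noncomputable def centeredPartialSum (f : ℕ → E) (s e t : ℕ) : E :=
  ∑ i ∈ Ioc s t, f i - (((t : ℝ) - s) / ((e : ℝ) - s)) • ∑ i ∈ Ioc s e, f i

lemma covCusum_eq_cusum {p : ℕ} (S : ℕ → Matrix (Fin p) (Fin p) ℝ) (s e t : ℕ) :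
    covCusum S s e t = cusum S s e t :=
  rfl

@[simp]
lemma cusum_self_left (f : ℕ → E) (s e : ℕ) : cusum f s e s = 0 := by
  simp [cusum]

@[simp]
lemma cusum_self_right (f : ℕ → E) (s e : ℕ) : cusum f s e e = 0 := by
  simp [cusum]

lemma cusumScale_smul_cusum (f : ℕ → E) {s e t : ℕ} (hs : s ≤ t) (he : t ≤ e) :
    cusumScale s e t • cusum f s e t = centeredPartialSum f s e t := by
  rcases eq_or_lt_of_le hs with rfl | hs
  · simp [cusumScale, centeredPartialSum]
  rcases eq_or_lt_of_le he with rfl | he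
  · have : ((t : ℝ) - s) ≠ 0 := sub_ne_zero.2 (by exact_mod_cast hs.ne')
    simp [cusumScale, centeredPartialSum, this]
  have hts : (0 : ℝ) < t - s := sub_pos.2 (by exact_mod_cast hs)
  have het : (0 : ℝ) < e - t := sub_pos.2 (by exact_mod_cast he)
  have hes : (0 : ℝ) < e - s := by linarith
  have hsqrt_mul : ∀ {x y z : ℝ}, 0 ≤ x → 0 ≤ z → x * y = z ^ 2 → √x * √y = z :=
    fun hx hz hxy => by rw [← Real.sqrt_mul hx, hxy, Real.sqrt_sq hz]
  have hleft : cusumScale s e t * √(((e : ℝ) - t) / (((e : ℝ) - s) * ((t : ℝ) - s)))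
      = ((e : ℝ) - t) / ((e : ℝ) - s) :=
    hsqrt_mul (by positivity) (by positivity) (by field_simp)
  have hright : cusumScale s e t * √(((t : ℝ) - s) / (((e : ℝ) - s) * ((e : ℝ) - t)))
      = ((t : ℝ) - s) / ((e : ℝ) - s) :=
    hsqrt_mul (by positivity) (by positivity) (by field_simp)
  rw [cusum, smul_sub, smul_smul, smul_smul, hleft, hright, centeredPartialSum,
    ← sum_Ioc_consecutive _ hs.le he.le]
  match_scalars
  · field_simp; ring
  · ring

lemma sum_Ioc_eq_add_smul_of_const (f : ℕ → E) {C : E} {a b c : ℕ} (hab : a ≤ b) (hbc : b ≤ c)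
    (hC : ∀ i ∈ Ioc b c, f i = C) :
    ∑ i ∈ Ioc a c, f i = ∑ i ∈ Ioc a b, f i + ((c : ℝ) - b) • C := by
  rw [← sum_Ioc_consecutive _ hab hbc, sum_congr rfl hC, sum_const, Nat.card_Ioc,
    ← Nat.cast_smul_eq_nsmul ℝ, Nat.cast_sub hbc]

lemma centeredPartialSum_affine_of_const (f : ℕ → E) {C : E} {s e t₁ t t₂ : ℕ}
    (hs : s ≤ t₁) (h₁ : t₁ ≤ t) (h₂ : t ≤ t₂) (hC : ∀ i ∈ Ioc t₁ t₂, f i = C) :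
    ((t₂ : ℝ) - t₁) • centeredPartialSum f s e t
      = ((t₂ : ℝ) - t) • centeredPartialSum f s e t₁
        + ((t : ℝ) - t₁) • centeredPartialSum f s e t₂ := by
  have hF := sum_Ioc_eq_add_smul_of_const f hs h₁ fun i hi => hC i (Ioc_subset_Ioc_right h₂ hi)
  have hF₂ := sum_Ioc_eq_add_smul_of_const f hs (h₁.trans h₂) hC
  simp only [centeredPartialSum, hF, hF₂]
  match_scalars <;> ring

end Cusum

lemma norm_cusum_le_max_of_const {E : Type*} [SeminormedAddCommGroup E] [NormedSpace ℝ E]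
    (f : ℕ → E) {C : E} {s e t₁ t t₂ : ℕ}
    (hs : s ≤ t₁) (h₁ : t₁ ≤ t) (h₂ : t ≤ t₂) (he : t₂ ≤ e) (hst : s < t) (hte : t < e)
    (hC : ∀ i ∈ Ioc t₁ t₂, f i = C) :
    ‖cusum f s e t‖ ≤ max ‖cusum f s e t₁‖ ‖cusum f s e t₂‖ := by
  rcases eq_or_lt_of_le h₁ with rfl | h₁
  · exact le_max_left _ _
  have hnorm : ∀ {x : ℕ}, s ≤ x → x ≤ e →
      ‖centeredPartialSum f s e x‖ = cusumScale s e x * ‖cusum f s e x‖ := fun hx hx' => by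
    rw [← cusumScale_smul_cusum f hx hx', norm_smul_of_nonneg (cusumScale_nonneg _ _ _)]
  have hst' : (s : ℝ) < t := by exact_mod_cast hst
  have hte' : (t : ℝ) < e := by exact_mod_cast hte
  have hw₁ : (0 : ℝ) ≤ (t₂ : ℝ) - t := sub_nonneg.2 (by exact_mod_cast h₂)
  have hw₂ : (0 : ℝ) < (t : ℝ) - t₁ := sub_pos.2 (by exact_mod_cast h₁)
  have hM₁ := le_max_left ‖cusum f s e t₁‖ ‖cusum f s e t₂‖
  have hM₂ := le_max_right ‖cusum f s e t₁‖ ‖cusum f s e t₂‖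
  set M := max ‖cusum f s e t₁‖ ‖cusum f s e t₂‖
  have key : ((t₂ : ℝ) - t₁) * cusumScale s e t * ‖cusum f s e t‖
      ≤ ((t₂ : ℝ) - t₁) * cusumScale s e t * M :=
    calc ((t₂ : ℝ) - t₁) * cusumScale s e t * ‖cusum f s e t‖
        = ‖((t₂ : ℝ) - t₁) • centeredPartialSum f s e t‖ := by
          rw [norm_smul_of_nonneg (by linarith), hnorm hst.le hte.le, mul_assoc]
      _ ≤ ((t₂ : ℝ) - t) * ‖centeredPartialSum f s e t₁‖
            + ((t : ℝ) - t₁) * ‖centeredPartialSum f s e t₂‖ := by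
          rw [centeredPartialSum_affine_of_const f hs h₁.le h₂ hC, ← norm_smul_of_nonneg hw₁,
            ← norm_smul_of_nonneg hw₂.le]
          exact norm_add_le _ _
      _ ≤ ((t₂ : ℝ) - t) * (cusumScale s e t₁ * M) + ((t : ℝ) - t₁) * (cusumScale s e t₂ * M) := by
          rw [hnorm hs (by omega), hnorm (by omega) he]
          have := cusumScale_nonneg s e t₁
          have := cusumScale_nonneg s e t₂
          gcongr
      _ ≤ ((t₂ : ℝ) - t₁) * cusumScale s e t * M := by
          rw [← mul_assoc, ← mul_assoc, ← add_mul]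
          exact mul_le_mul_of_nonneg_right (cusumScale_chord_le (by exact_mod_cast hs)
            (by exact_mod_cast h₁.le) (by exact_mod_cast h₂) (by exact_mod_cast he))
            ((norm_nonneg _).trans hM₁)
  exact le_of_mul_le_mul_left key (mul_pos (by linarith) (cusumScale_pos hst' hte'))

lemma exists_lt_le_succ {α : Type*} [LinearOrder α] (η : ℕ → α) {t : α} {N : ℕ}
    (h₀ : η 0 < t) (hN : t ≤ η N) : ∃ k < N, η k < t ∧ t ≤ η (k + 1) := by
  classical
  have hex : ∃ j, t ≤ η j := ⟨N, hN⟩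
  have hfind : Nat.find hex ≠ 0 := fun h => (h ▸ Nat.find_spec hex).not_gt h₀
  obtain ⟨k, hk⟩ := Nat.exists_eq_add_one_of_ne_zero hfind
  have hkN : k < N := by have := Nat.find_min' hex hN; omega
  exact ⟨k, hkN, not_le.1 (Nat.find_min hex (by omega)), hk.symm ▸ Nat.find_spec hex⟩

open scoped Matrix.Norms.L2Operator

lemma matOpNorm_eq_norm {p : ℕ} (M : Matrix (Fin p) (Fin p) ℝ) : matOpNorm M = ‖M‖ := rfl

theorem covCusum_opNorm_maximized_at_change_point_general
    {p : ℕ} (n K : ℕ) (S : ℕ → Matrix (Fin p) (Fin p) ℝ) (η : ℕ → ℕ)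
    (hη0 : η 0 = 0) (hηlast : η (K + 1) = n)
    -- the covariances are constant between consecutive change points
    (hconst : ∀ k, k ≤ K → ∀ i j, η k < i → i ≤ η (k + 1) → η k < j → j ≤ η (k + 1) →
      S i = S j)
    (s e : ℕ) (hen : e ≤ n)
    -- `(s, e)` contains at least one change point
    (hcp : ∃ k, 1 ≤ k ∧ k ≤ K ∧ s < η k ∧ η k < e) :
    ∃ k, 1 ≤ k ∧ k ≤ K ∧ s < η k ∧ η k < e ∧
      ∀ t, s < t → t < e → matOpNorm (covCusum S s e t) ≤ matOpNorm (covCusum S s e (η k)) := by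
  classical
  obtain ⟨k₀, hk₀, hmax⟩ := ((Icc 1 K).filter fun k => s < η k ∧ η k < e).exists_max_image
    (fun k => ‖cusum S s e (η k)‖) (by simpa [Finset.Nonempty, and_assoc] using hcp)
  simp only [mem_filter, mem_Icc, and_imp] at hk₀ hmax
  refine ⟨k₀, hk₀.1.1, hk₀.1.2, hk₀.2.1, hk₀.2.2, fun t hst hte => ?_⟩
  simp only [matOpNorm_eq_norm, covCusum_eq_cusum]
  have hclamp : ∀ j ≤ K + 1, ‖cusum S s e (max s (min e (η j)))‖ ≤ ‖cusum S s e (η k₀)‖ := by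
    intro j hj
    rcases le_or_gt (η j) s with hjs | hjs
    · rw [max_eq_left (min_le_of_right_le hjs), cusum_self_left, norm_zero]
      exact norm_nonneg _
    rcases le_or_gt e (η j) with hje | hje
    · rw [min_eq_left hje, max_eq_right (by omega), cusum_self_right, norm_zero]
      exact norm_nonneg _
    rw [min_eq_right hje.le, max_eq_right hjs.le]
    have hj₀ : j ≠ 0 := by rintro rfl; omega
    have hj₁ : j ≠ K + 1 := by rintro rfl; omega
    exact hmax j (by omega) (by omega) hjs hje
  obtain ⟨k, hkK, hkt, htk⟩ := exists_lt_le_succ η (t := t) (N := K + 1) (by omega) (by omega)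
  calc ‖cusum S s e t‖
      ≤ max ‖cusum S s e (max s (min e (η k)))‖ ‖cusum S s e (max s (min e (η (k + 1))))‖ :=
        norm_cusum_le_max_of_const S (by omega) (by omega) (by omega) (by omega) hst hte
          fun i hi => hconst k (by omega) i t (by grind) (by grind) hkt htk
    _ ≤ ‖cusum S s e (η k₀)‖ := max_le (hclamp k (by omega)) (hclamp (k + 1) hkK)

theorem covCusum_opNorm_maximized_at_change_point
    {p : ℕ} (n K : ℕ) (S : ℕ → Matrix (Fin p) (Fin p) ℝ) (η : ℕ → ℕ)
    (hsym : ∀ i, (S i).IsSymm)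
    (hη0 : η 0 = 0) (hηlast : η (K + 1) = n)
    (hmono : ∀ k, k ≤ K → η k < η (k + 1))
    -- the covariances are constant between consecutive change points
    (hconst : ∀ k, k ≤ K → ∀ i j, η k < i → i ≤ η (k + 1) → η k < j → j ≤ η (k + 1) →
      S i = S j)
    (s e : ℕ) (hse : s < e) (hen : e ≤ n)
    -- `(s, e)` contains at least one change point
    (hcp : ∃ k, 1 ≤ k ∧ k ≤ K ∧ s < η k ∧ η k < e) :
    ∃ k, 1 ≤ k ∧ k ≤ K ∧ s < η k ∧ η k < e ∧
      ∀ t, s < t → t < e → matOpNorm (covCusum S s e t) ≤ matOpNorm (covCusum S s e (η k)) :=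
  covCusum_opNorm_maximized_at_change_point_general n K S η hη0 hηlast hconst s e hen hcp
end
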